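/- arXiv:1806.07277 — 2 statements merged into one kernel-verified Lean document; each statement's English description precedes it below -/
import Mathlib

section
/- Let μ ∈ ℝ with μ ≠ 0, ω_f ∈ ℝ, and define v(x,y,z,t) = e^{-μ(x+y+z)/U₀}·e^{μt}·∫₀ᵗ e^{-μτ} sin(ω_f τ) dτ for t ≥ 0, where U₀ > 0. If ω_f ≠ 0, then for each fixed (x,y,z), limsup_{t→∞} log|v(x,y,z,t)|/t = μ when μ > 0, i.e., the exponential growth rate of v equals μ. -/
/-!
The Duhamel integral `∫₀ᵗ e^{-μτ} sin(ω_f τ) dτ` has an explicit primitive, and for `μ > 0`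
it converges to `ω_f / (μ² + ω_f²)`, which is nonzero. Hence `v = C · e^{μt} · (L + o(1))` with
`C L ≠ 0`, so `log |v| / t = μ + O(1/t)` tends to `μ`, and the limsup is this limit.
-/

open Filter Topology

theorem hasDerivAt_exp_mul_sin_primitive (a ω τ : ℝ) (h : a ^ 2 + ω ^ 2 ≠ 0) :
    HasDerivAt (fun τ => Real.exp (a * τ) * (a * Real.sin (ω * τ) - ω * Real.cos (ω * τ))
      / (a ^ 2 + ω ^ 2)) (Real.exp (a * τ) * Real.sin (ω * τ)) τ := by
  have he := ((hasDerivAt_id τ).const_mul a).exp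
  have hs := ((hasDerivAt_id τ).const_mul ω).sin
  have hc := ((hasDerivAt_id τ).const_mul ω).cos
  refine ((he.mul ((hs.const_mul a).sub (hc.const_mul ω))).div_const _).congr_deriv ?_
  simp only [id, mul_one, Pi.sub_apply]
  field_simp
  ring

theorem integral_exp_mul_sin (a ω t : ℝ) (h : a ^ 2 + ω ^ 2 ≠ 0) :
    ∫ τ in (0:ℝ)..t, Real.exp (a * τ) * Real.sin (ω * τ) =
      Real.exp (a * t) * (a * Real.sin (ω * t) - ω * Real.cos (ω * t)) / (a ^ 2 + ω ^ 2)
        + ω / (a ^ 2 + ω ^ 2) := by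
  rw [intervalIntegral.integral_eq_sub_of_hasDerivAt
    (fun τ _ => hasDerivAt_exp_mul_sin_primitive a ω τ h)
    (Continuous.intervalIntegrable (by fun_prop) _ _)]
  simp only [mul_zero, Real.exp_zero, Real.sin_zero, Real.cos_zero]
  ring

theorem tendsto_integral_exp_mul_sin {a : ℝ} (ha : a < 0) (ω : ℝ) :
    Tendsto (fun t => ∫ τ in (0:ℝ)..t, Real.exp (a * τ) * Real.sin (ω * τ)) atTop
      (𝓝 (ω / (a ^ 2 + ω ^ 2))) := by
  have hD : a ^ 2 + ω ^ 2 ≠ 0 := by nlinarith [sq_nonneg ω]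
  simp_rw [integral_exp_mul_sin a ω _ hD]
  suffices Tendsto (fun t => Real.exp (a * t) * (a * Real.sin (ω * t) - ω * Real.cos (ω * t)))
      atTop (𝓝 0) by
    simpa using (this.div_const (a ^ 2 + ω ^ 2)).add_const (ω / (a ^ 2 + ω ^ 2))
  have hexp : Tendsto (fun t => Real.exp (a * t)) atTop (𝓝 0) :=
    Real.tendsto_exp_atBot.comp (tendsto_id.const_mul_atTop_of_neg ha)
  refine hexp.zero_mul_isBoundedUnder_le ?_
  refine isBoundedUnder_of ⟨|a| + |ω|, fun t => ?_⟩
  simp only [Function.comp, Real.norm_eq_abs]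
  calc |a * Real.sin (ω * t) - ω * Real.cos (ω * t)|
      ≤ |a| * |Real.sin (ω * t)| + |ω| * |Real.cos (ω * t)| := by
        rw [← abs_mul, ← abs_mul]; exact abs_sub _ _
    _ ≤ |a| * 1 + |ω| * 1 := by
        gcongr
        exacts [Real.abs_sin_le_one _, Real.abs_cos_le_one _]
    _ = |a| + |ω| := by ring

theorem tendsto_log_abs_div_self_of_tendsto {g : ℝ → ℝ} {L : ℝ} (hg : Tendsto g atTop (𝓝 L))
    (hL : L ≠ 0) : Tendsto (fun t => Real.log |g t| / t) atTop (𝓝 0) :=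
  ((Real.continuousAt_log (abs_ne_zero.2 hL)).tendsto.comp hg.abs).div_atTop tendsto_id

theorem tendsto_log_abs_mul_exp_div_self {g : ℝ → ℝ} {L : ℝ} (hg : Tendsto g atTop (𝓝 L))
    (hL : L ≠ 0) (μ : ℝ) :
    Tendsto (fun t => Real.log |Real.exp (μ * t) * g t| / t) atTop (𝓝 μ) := by
  have hsplit : ∀ᶠ t in atTop, Real.log |g t| / t + μ = Real.log |Real.exp (μ * t) * g t| / t := by
    filter_upwards [hg.eventually_ne hL, eventually_gt_atTop 0] with t hgt ht
    rw [abs_mul, Real.abs_exp, Real.log_mul (Real.exp_ne_zero _) (abs_ne_zero.2 hgt),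
      Real.log_exp]
    field_simp
    ring
  simpa using ((tendsto_log_abs_div_self_of_tendsto hg hL).add_const μ).congr' hsplit

theorem stmt_14_general (U₀ μ ωf : ℝ) (hμpos : 0 < μ)
    (hω : ωf ≠ 0)
    (v : ℝ → ℝ → ℝ → ℝ → ℝ)
    (hv : v = fun x y z t =>
      Real.exp (-μ * (x + y + z) / U₀) * Real.exp (μ * t)
        * ∫ τ in (0:ℝ)..t, Real.exp (-μ * τ) * Real.sin (ωf * τ)) :
    ∀ x y z : ℝ,
      limsup (fun t : ℝ => Real.log |v x y z t| / t) atTop = μ := by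
  intro x y z
  have hlim : ωf / ((-μ) ^ 2 + ωf ^ 2) ≠ 0 := div_ne_zero hω (by positivity)
  have hI := (tendsto_integral_exp_mul_sin (neg_neg_of_pos hμpos) ωf).const_mul
    (Real.exp (-μ * (x + y + z) / U₀))
  refine Tendsto.limsup_eq ?_
  convert tendsto_log_abs_mul_exp_div_self hI (mul_ne_zero (Real.exp_ne_zero _) hlim) μ using 3
  rw [hv, mul_left_comm, ← mul_assoc]

/-- For `μ > 0`, `ω_f ≠ 0` and
`v(x,y,z,t) = e^{-μ(x+y+z)/U₀}·e^{μt}·∫₀ᵗ e^{-μτ} sin(ω_f τ)dτ`, the exponential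
growth rate of `v` equals `μ`: `limsup_{t→∞} log|v(x,y,z,t)|/t = μ`. -/
theorem stmt_14 (U₀ μ ωf : ℝ) (hU : 0 < U₀) (hμ : μ ≠ 0) (hμpos : 0 < μ)
    (hω : ωf ≠ 0)
    (v : ℝ → ℝ → ℝ → ℝ → ℝ)
    (hv : v = fun x y z t =>
      Real.exp (-μ * (x + y + z) / U₀) * Real.exp (μ * t)
        * ∫ τ in (0:ℝ)..t, Real.exp (-μ * τ) * Real.sin (ωf * τ)) :
    ∀ x y z : ℝ,
      limsup (fun t : ℝ => Real.log |v x y z t| / t) atTop = μ :=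
  stmt_14_general U₀ μ ωf hμpos hω v hv
end

section
/- Let k₁,…,k₄, l₁,…,l₄, m₁,…,m₄ be reals with k₁k₂k₃k₄ ≠ 0, and let Δ = (c₀ρ₀/(k₃k₄))·[√(k₁²+l₁²+m₁²)(k₂k₃k₄ + k₃m₂m₄ + k₄l₂l₃) + √(k₂²+l₂²+m₂²)(k₁k₃k₄ + k₃m₁m₄ + k₄l₁l₃)] ≠ 0. Consider the linear map T: (C¹(ℝ))⁴ → (C¹(ℝ))⁴ sending (f₁,f₂,f₃,f₄) to the restrictions to the x-axis ξ ↦ (F(ξ/k₁,0,0), G(ξ/k₁,0,0), H(ξ/k₁,0,0), P(ξ/k₁,0,0)) when all arguments Lᵢ are evaluated with y = z = 0 and kᵢ = k₁ (so that Lᵢ = k₁x = ξ). Then for any (F̃,G̃,H̃,P̃) in the image of T there exists a unique (f₁,f₂,f₃,f₄) with T(f₁,f₂,f₃,f₄) = (F̃,G̃,H̃,P̃); in particular, if the 4×4 coefficient matrix M with rows (k₁, k₂, l₃/k₃, m₄/k₄), (l₁, l₂, -1, 0), (m₁, m₂, 0, -1), (-c₀ρ₀r₁, c₀ρ₀r₂,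 0, 0) (rᵢ = √(kᵢ²+lᵢ²+mᵢ²)) has determinant ±Δ ≠ 0, then M is invertible. -/
/- Expanding along the last row leaves two 3 × 3 minors; clearing the denominators `k₃ k₄` of
the third and fourth columns turns their combination into `Δ`. -/

theorem det_initialDataMatrix {R : Type*} [CommRing R] (k₁ k₂ l₁ l₂ m₁ m₂ p q a b : R) :
    Matrix.det !![k₁, k₂, p, q;
                  l₁, l₂, -1, 0;
                  m₁, m₂, 0, -1;
                  -a, b, 0, 0] =
      a * (k₂ + p * l₂ + q * m₂) + b * (k₁ + p * l₁ + q * m₁) := by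
  rw [Matrix.det_succ_row_zero, Fin.sum_univ_four]
  simp only [Nat.succ_eq_add_one, Nat.reduceAdd, Fin.isValue, Fin.coe_ofNat_eq_mod, Nat.zero_mod,
    pow_zero, Matrix.of_apply, Matrix.cons_val', Matrix.cons_val_zero, Matrix.cons_val_fin_one,
    one_mul, Fin.succAbove_zero, Matrix.det_fin_three, Matrix.submatrix_apply, Fin.succ_zero_eq_one,
    Matrix.cons_val_one, Fin.succ_one_eq_two, Matrix.cons_val, mul_zero, Fin.reduceSucc, mul_neg,
    mul_one, sub_self, neg_mul, neg_neg, zero_add, zero_mul, add_zero, sub_zero, Nat.one_mod,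
    pow_one, Fin.succAbove, Fin.castSucc_zero, zero_lt_one, ↓reduceIte, Fin.castSucc_one,
    lt_self_iff_false, Fin.reduceCastSucc, Fin.lt_one_iff, Fin.reduceEq, neg_zero, Nat.reduceMod,
    even_two, Even.neg_pow, one_pow, Fin.reduceLT, sub_neg_eq_add, Nat.mod_succ]
  ring

theorem stmt_17_general (c₀ ρ₀ : ℝ)
    (k₁ k₂ k₃ k₄ l₁ l₂ l₃ m₁ m₂ m₄ : ℝ)
    (hk : k₁ * k₂ * k₃ * k₄ ≠ 0)
    (r₁ r₂ : ℝ)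
    (Δ : ℝ)
    (hΔdef : Δ = (c₀ * ρ₀ / (k₃ * k₄))
      * (r₁ * (k₂ * k₃ * k₄ + k₃ * m₂ * m₄ + k₄ * l₂ * l₃)
        + r₂ * (k₁ * k₃ * k₄ + k₃ * m₁ * m₄ + k₄ * l₁ * l₃)))
    (hΔ : Δ ≠ 0)
    (M : Matrix (Fin 4) (Fin 4) ℝ)
    (hM : M = !![k₁, k₂, l₃ / k₃, m₄ / k₄;
                 l₁, l₂, -1, 0;
                 m₁, m₂, 0, -1;
                 -(c₀ * ρ₀ * r₁), c₀ * ρ₀ * r₂, 0, 0]) :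
    (M.det = Δ ∨ M.det = -Δ) ∧ IsUnit M := by
  have hk₃ : k₃ ≠ 0 := right_ne_zero_of_mul (left_ne_zero_of_mul hk)
  have hk₄ : k₄ ≠ 0 := right_ne_zero_of_mul hk
  have hdet : M.det = Δ := by
    rw [hM, det_initialDataMatrix, hΔdef]
    field_simp
    ring
  exact ⟨Or.inl hdet, (Matrix.isUnit_iff_isUnit_det M).mpr (hdet ▸ hΔ.isUnit)⟩

/-- The coefficient matrix `M` of the representation formula (13) has
determinant `Δ` (up to sign, here the sign is `+`); hence if `Δ ≠ 0` then `M` is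
invertible, so the representation of initial data by `(f₁,f₂,f₃,f₄)` is unique. -/
theorem stmt_17 (c₀ ρ₀ : ℝ) (hc : 0 < c₀) (hρ : 0 < ρ₀)
    (k₁ k₂ k₃ k₄ l₁ l₂ l₃ l₄ m₁ m₂ m₃ m₄ : ℝ)
    (hk : k₁ * k₂ * k₃ * k₄ ≠ 0)
    (r₁ r₂ : ℝ)
    (hr₁ : r₁ = Real.sqrt (k₁ ^ 2 + l₁ ^ 2 + m₁ ^ 2))
    (hr₂ : r₂ = Real.sqrt (k₂ ^ 2 + l₂ ^ 2 + m₂ ^ 2))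
    (Δ : ℝ)
    (hΔdef : Δ = (c₀ * ρ₀ / (k₃ * k₄))
      * (r₁ * (k₂ * k₃ * k₄ + k₃ * m₂ * m₄ + k₄ * l₂ * l₃)
        + r₂ * (k₁ * k₃ * k₄ + k₃ * m₁ * m₄ + k₄ * l₁ * l₃)))
    (hΔ : Δ ≠ 0)
    (M : Matrix (Fin 4) (Fin 4) ℝ)
    (hM : M = !![k₁, k₂, l₃ / k₃, m₄ / k₄;
                 l₁, l₂, -1, 0;
                 m₁, m₂, 0, -1;
                 -(c₀ * ρ₀ * r₁), c₀ * ρ₀ * r₂, 0, 0]) :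
    (M.det = Δ ∨ M.det = -Δ) ∧ IsUnit M :=
  stmt_17_general c₀ ρ₀ k₁ k₂ k₃ k₄ l₁ l₂ l₃ m₁ m₂ m₄ hk r₁ r₂ Δ hΔdef hΔ M hM
end
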